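/- There exists ε₀ > 0 such that for all 0 < ε ≤ ε₀, if λ ∈ [0,∞) and u ∈ C²([0,1]) is a nonzero solution of φ₂u'' + φ₁u' = λu on [0,1], and u_L denotes the restriction of u to [0,ε], then sin(√(6λ)·(1−2ε))·(u_L'(ε)² − 6λ·u_L(ε)²) + 2√(6λ)·cos(√(6λ)·(1−2ε))·u_L(ε)·u_L'(ε) = 0. -/

import Mathlib

open Real Set Filter Topology MeasureTheory

/-- The degenerate point `x₀ = (2 − √3)ε`. -/
noncomputable def x0 (ε : ℝ) : ℝ := (2 - Real.sqrt 3) * ε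

/-- Leading coefficient `φ₂` of `D_ε` on the interval. -/
noncomputable def phi2 (ε x : ℝ) : ℝ :=
  if x ≤ ε then (1/12) * (1 - 4*(x/ε) + (x/ε)^2)
  else if x ≤ 1 - ε then -(1/6)
  else (1/12) * (1 - 4*((1-x)/ε) + ((1-x)/ε)^2)

/-- First-order coefficient `φ₁` of `D_ε` on the interval. -/
noncomputable def phi1 (ε x : ℝ) : ℝ :=
  if x ≤ ε then -6 * (1 - x/ε) * ((1 + x/ε)^3)⁻¹
  else if x ≤ 1 - ε then 0
  else 6 * (1 - (1-x)/ε) * ((1 + (1-x)/ε)^3)⁻¹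

/-- Integration-factor function `g` on `[0, ε]`. -/
noncomputable def gfun (ε x : ℝ) : ℝ :=
  Real.sign (x - x0 ε) * |x - x0 ε| ^ ((4 + 2*Real.sqrt 3) * ε) *
    |x - 4*ε + x0 ε| ^ ((4 - 2*Real.sqrt 3) * ε) *
    (x + ε) ^ (-(8*ε)) *
    Real.exp (12*ε^3/(ε+x)^2 + 12*ε^2/(ε+x))

/-- Sturm–Liouville principal coefficient `p`. -/
noncomputable def pfun (ε x : ℝ) : ℝ :=
  if x ≤ ε then gfun ε x / (6 * gfun ε ε)
  else if x ≤ 1 - ε then 1/6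
  else gfun ε (1-x) / (6 * gfun ε ε)

/-- Sturm–Liouville weight `w = -p/φ₂`. -/
noncomputable def wfun (ε x : ℝ) : ℝ := -pfun ε x / phi2 ε x


/-!
On `[ε, 1 - ε]` the equation reads `u'' = -6λ u`, so `(u, u')` at `1 - ε` is `(u, u')` at `ε`
rotated by the angle `√(6λ) (1 - 2ε)`. Since `φ₂` is even and `φ₁` odd under `x ↦ 1 - x`, the
reflection `v x = u (1 - x)` solves the same equation on `[0, ε]`. On `(x₀, ε)` the function `g`
is an integrating factor, `g' = g φ₁ / φ₂`, so `g · W(u, v)` is constant there; as `g` vanishes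
at the degenerate point `x₀` but not at `ε`, the Wronskian `W(u, v)` vanishes at `ε`. Expanding
it with the rotation gives the identity.
-/
lemma sqrt_three_lt_two : √3 < 2 := by
  nlinarith [Real.sq_sqrt (by norm_num : (0:ℝ) ≤ 3), Real.sqrt_nonneg 3]

lemma one_lt_sqrt_three : 1 < √3 := by
  nlinarith [Real.sq_sqrt (by norm_num : (0:ℝ) ≤ 3), Real.sqrt_nonneg 3]

lemma x0_pos {ε : ℝ} (hε : 0 < ε) : 0 < x0 ε :=
  mul_pos (by linarith [sqrt_three_lt_two]) hε

lemma x0_lt_self {ε : ℝ} (hε : 0 < ε) : x0 ε < ε := by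
  unfold x0; nlinarith [one_lt_sqrt_three]

lemma x0_mul_four_mul_sub_x0 (ε : ℝ) : x0 ε * (4 * ε - x0 ε) = ε ^ 2 := by
  unfold x0
  linear_combination (-ε ^ 2) * Real.sq_sqrt (show (0:ℝ) ≤ 3 by norm_num)

lemma phi2_eq_of_le {ε x : ℝ} (hε : ε ≠ 0) (hx : x ≤ ε) :
    phi2 ε x = (x - x0 ε) * (x - (4 * ε - x0 ε)) / (12 * ε ^ 2) := by
  rw [phi2, if_pos hx]
  field_simp
  linear_combination -x0_mul_four_mul_sub_x0 ε

lemma phi2_neg {ε x : ℝ} (hε : 0 < ε) (hx : x ∈ Ioc (x0 ε) ε) : phi2 ε x < 0 := by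
  rw [phi2_eq_of_le hε.ne' hx.2]
  have : x < 4 * ε - x0 ε := by linarith [x0_lt_self hε, hx.2]
  exact div_neg_of_neg_of_pos (mul_neg_of_pos_of_neg (by linarith [hx.1]) (by linarith))
    (by positivity)

lemma phi2_eq_of_mem_Icc {ε x : ℝ} (hε : 0 < ε) (hx : x ∈ Icc ε (1 - ε)) : phi2 ε x = -(1/6) := by
  rcases hx.1.eq_or_lt with rfl | h
  · simp [phi2, hε.ne']; norm_num
  · rw [phi2, if_neg h.not_ge, if_pos hx.2]

lemma phi1_eq_of_mem_Icc {ε x : ℝ} (hε : 0 < ε) (hx : x ∈ Icc ε (1 - ε)) : phi1 ε x = 0 := by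
  rcases hx.1.eq_or_lt with rfl | h
  · simp [phi1, hε.ne']
  · rw [phi1, if_neg h.not_ge, if_pos hx.2]

lemma phi2_one_sub {ε x : ℝ} (hε : 0 < ε) (hε2 : ε < 1/2) (hx : x ≤ ε) :
    phi2 ε (1 - x) = phi2 ε x := by
  rcases hx.eq_or_lt with rfl | h
  · rw [phi2_eq_of_mem_Icc hε ⟨by linarith, le_rfl⟩]; simp [phi2, hε.ne']; norm_num
  · rw [phi2, phi2, if_neg (by linarith), if_neg (by linarith), if_pos hx, sub_sub_cancel]

lemma phi1_one_sub {ε x : ℝ} (hε : 0 < ε) (hε2 : ε < 1/2) (hx : x ≤ ε) :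
    phi1 ε (1 - x) = -phi1 ε x := by
  rcases hx.eq_or_lt with rfl | h
  · rw [phi1_eq_of_mem_Icc hε ⟨by linarith, le_rfl⟩]; simp [phi1, hε.ne']
  · rw [phi1, phi1, if_neg (by linarith), if_neg (by linarith), if_pos hx, sub_sub_cancel]
    ring

lemma HasDerivAt.mul_of_logDeriv {f g : ℝ → ℝ} {a b x : ℝ}
    (hf : HasDerivAt f (f x * a) x) (hg : HasDerivAt g (g x * b) x) :
    HasDerivAt (fun y => f y * g y) (f x * g x * (a + b)) x :=
  (hf.mul hg).congr_deriv (by ring)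

lemma HasDerivAt.rpow_const_of_pos {f : ℝ → ℝ} {f' x : ℝ} (r : ℝ)
    (hf : HasDerivAt f f' x) (hx : 0 < f x) :
    HasDerivAt (fun y => f y ^ r) (f x ^ r * (r * f' / f x)) x :=
  (hf.rpow_const (Or.inl hx.ne')).congr_deriv (by rw [rpow_sub_one hx.ne']; field_simp)

noncomputable def gfunSmooth (ε x : ℝ) : ℝ :=
  (x - x0 ε) ^ ((4 + 2 * √3) * ε) * (4 * ε - x0 ε - x) ^ ((4 - 2 * √3) * ε) *
    (x + ε) ^ (-(8 * ε)) * exp (12 * ε ^ 3 / (ε + x) ^ 2 + 12 * ε ^ 2 / (ε + x))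

lemma gfun_eq_gfunSmooth {ε x : ℝ} (hε : 0 < ε) (hx : x ∈ Icc (x0 ε) ε) :
    gfun ε x = gfunSmooth ε x := by
  have h4 : 0 < 4 * ε - x0 ε - x := by linarith [x0_lt_self hε, hx.2]
  rcases hx.1.eq_or_lt with rfl | h
  · have : (4 + 2 * √3) * ε ≠ 0 := by positivity
    simp [gfun, gfunSmooth, zero_rpow this]
  · have habs : |x - 4 * ε + x0 ε| = 4 * ε - x0 ε - x := by
      rw [abs_of_neg (by linarith)]; ring
    rw [gfun, gfunSmooth, sub_pos.2 h |> Real.sign_of_pos, abs_of_pos (sub_pos.2 h), habs,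
      add_comm x ε]
    ring

lemma gfunSmooth_pos {ε x : ℝ} (hε : 0 < ε) (hx : x ∈ Ioc (x0 ε) ε) : 0 < gfunSmooth ε x := by
  have h1 : 0 < x - x0 ε := sub_pos.2 hx.1
  have h4 : 0 < 4 * ε - x0 ε - x := by linarith [x0_lt_self hε, hx.2]
  have h3 : 0 < x + ε := by linarith [x0_pos hε, hx.1]
  unfold gfunSmooth
  positivity

lemma continuousOn_gfunSmooth {ε : ℝ} (hε : 0 < ε) :
    ContinuousOn (gfunSmooth ε) (Icc (x0 ε) ε) := by
  have ha : 0 ≤ (4 + 2 * √3) * ε := by positivity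
  have hb : 0 ≤ (4 - 2 * √3) * ε := mul_nonneg (by linarith [sqrt_three_lt_two]) hε.le
  intro x hx
  have h3 : x + ε ≠ 0 := by linarith [x0_pos hε, hx.1]
  have h3' : ε + x ≠ 0 := by linarith [x0_pos hε, hx.1]
  unfold gfunSmooth
  fun_prop (disch := simp [*])

lemma phi1_div_phi2 {ε x : ℝ} (hε : 0 < ε) (hx : x ∈ Ioc (x0 ε) ε) :
    phi1 ε x / phi2 ε x = 2 * (4 * ε - x0 ε) / (x - x0 ε) - 2 * x0 ε / (4 * ε - x0 ε - x)
      - 8 * ε / (x + ε) - 24 * ε ^ 3 / (ε + x) ^ 3 - 12 * ε ^ 2 / (ε + x) ^ 2 := by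
  have hc := x0_mul_four_mul_sub_x0 ε
  have h1 : x - x0 ε ≠ 0 := (sub_pos.2 hx.1).ne'
  have h4 : 4 * ε - x0 ε - x ≠ 0 := by linarith [x0_lt_self hε, hx.2]
  have h3 : ε + x ≠ 0 := by linarith [x0_pos hε, hx.1]
  have h3' : x + ε ≠ 0 := by rwa [add_comm]
  have hq : (x - x0 ε) * (x - (4 * ε - x0 ε)) = x ^ 2 - 4 * ε * x + ε ^ 2 := by
    linear_combination hc
  have hq0 : x ^ 2 - 4 * ε * x + ε ^ 2 ≠ 0 := hq ▸ mul_ne_zero h1 (by contrapose! h4; linarith)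
  have hsplit : 2 * (4 * ε - x0 ε) / (x - x0 ε) - 2 * x0 ε / (4 * ε - x0 ε - x) =
      (8 * ε * x - 28 * ε ^ 2) / (x ^ 2 - 4 * ε * x + ε ^ 2) := by
    rw [div_sub_div _ _ h1 h4, div_eq_div_iff (mul_ne_zero h1 h4) hq0]
    linear_combination (-4 * (x ^ 2 - 4 * ε * x + ε ^ 2) + 8 * ε * x - 28 * ε ^ 2) * hc
  rw [sub_sub (_ / _) (_ / _), ← sub_sub, hsplit, phi2_eq_of_le hε.ne' hx.2, hq, phi1, if_pos hx.2]
  -- `field_simp` meets the quadratic in this normal form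
  have hq0' : x * (x - ε * 4) + ε ^ 2 ≠ 0 := by convert hq0 using 1; ring
  field_simp
  ring

lemma hasDerivAt_gfunSmooth {ε x : ℝ} (hε : 0 < ε) (hx : x ∈ Ioc (x0 ε) ε) :
    HasDerivAt (gfunSmooth ε) (gfunSmooth ε x * (phi1 ε x / phi2 ε x)) x := by
  have h1 : 0 < x - x0 ε := sub_pos.2 hx.1
  have h4 : 0 < 4 * ε - x0 ε - x := by linarith [x0_lt_self hε, hx.2]
  have h3 : 0 < x + ε := by linarith [x0_pos hε, hx.1]
  have h3' : ε + x ≠ 0 := by linarith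
  have dA := ((hasDerivAt_id' x).sub_const (x0 ε)).rpow_const_of_pos ((4 + 2 * √3) * ε) h1
  have dB := ((hasDerivAt_id' x).const_sub (4 * ε - x0 ε)).rpow_const_of_pos ((4 - 2 * √3) * ε) h4
  have dC := ((hasDerivAt_id' x).add_const ε).rpow_const_of_pos (-(8 * ε)) h3
  have dE : HasDerivAt (fun y => exp (12 * ε ^ 3 / (ε + y) ^ 2 + 12 * ε ^ 2 / (ε + y)))
      (exp (12 * ε ^ 3 / (ε + x) ^ 2 + 12 * ε ^ 2 / (ε + x)) *
        (-(24 * ε ^ 3) / (ε + x) ^ 3 - 12 * ε ^ 2 / (ε + x) ^ 2)) x := by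
    have d := (hasDerivAt_id' x).const_add ε
    refine (((hasDerivAt_const x _).fun_div (d.fun_pow 2) (pow_ne_zero 2 h3')).fun_add
      ((hasDerivAt_const x _).fun_div d h3')).exp.congr_deriv ?_
    field_simp
    ring
  have D : HasDerivAt (gfunSmooth ε) _ x :=
    ((dA.mul_of_logDeriv dB).mul_of_logDeriv dC).mul_of_logDeriv dE
  refine D.congr_deriv ?_
  rw [phi1_div_phi2 hε hx, gfunSmooth, x0]
  ring

lemma gfun_x0 (ε : ℝ) : gfun ε (x0 ε) = 0 := by
  simp [gfun]

lemma gfun_self_pos {ε : ℝ} (hε : 0 < ε) : 0 < gfun ε ε := by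
  rw [gfun_eq_gfunSmooth hε ⟨(x0_lt_self hε).le, le_rfl⟩]
  exact gfunSmooth_pos hε ⟨x0_lt_self hε, le_rfl⟩

lemma continuousOn_gfun {ε : ℝ} (hε : 0 < ε) : ContinuousOn (gfun ε) (Icc (x0 ε) ε) :=
  (continuousOn_gfunSmooth hε).congr fun _ hy => gfun_eq_gfunSmooth hε hy

lemma hasDerivAt_gfun {ε x : ℝ} (hε : 0 < ε) (hx : x ∈ Ioo (x0 ε) ε) :
    HasDerivAt (gfun ε) (gfun ε x * (phi1 ε x / phi2 ε x)) x := by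
  have heq : gfun ε =ᶠ[𝓝 x] gfunSmooth ε :=
    eventually_of_mem (Ioo_mem_nhds hx.1 hx.2) fun y hy =>
      gfun_eq_gfunSmooth hε (Ioo_subset_Icc_self hy)
  rw [heq.eq_of_nhds]
  exact (hasDerivAt_gfunSmooth hε (Ioo_subset_Ioc_self hx)).congr_of_eventuallyEq heq

theorem wronskian_eq_zero_of_integrating_factor {P φ₁ φ₂ u u' u'' v v' v'' : ℝ → ℝ} {a b lam : ℝ}
    (hab : a < b) (hPc : ContinuousOn P (Icc a b)) (hPa : P a = 0) (hPb : P b ≠ 0)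
    (hP : ∀ x ∈ Ioo a b, HasDerivAt P (P x * (φ₁ x / φ₂ x)) x) (hφ₂ : ∀ x ∈ Ioo a b, φ₂ x ≠ 0)
    (hu : ∀ x ∈ Icc a b, HasDerivAt u (u' x) x) (hu' : ∀ x ∈ Icc a b, HasDerivAt u' (u'' x) x)
    (hv : ∀ x ∈ Icc a b, HasDerivAt v (v' x) x) (hv' : ∀ x ∈ Icc a b, HasDerivAt v' (v'' x) x)
    (hequ : ∀ x ∈ Ioo a b, φ₂ x * u'' x + φ₁ x * u' x = lam * u x)
    (heqv : ∀ x ∈ Ioo a b, φ₂ x * v'' x + φ₁ x * v' x = lam * v x) :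
    u b * v' b - u' b * v b = 0 := by
  let F x := P x * (u x * v' x - u' x * v x)
  have cont {f f' : ℝ → ℝ} (hf : ∀ x ∈ Icc a b, HasDerivAt f (f' x) x) : ContinuousOn f (Icc a b) :=
    fun x hx => (hf x hx).continuousAt.continuousWithinAt
  have hFc : ContinuousOn F (Icc a b) :=
    hPc.mul (((cont hu).mul (cont hv')).sub ((cont hu').mul (cont hv)))
  have hF : ∀ x ∈ Ioo a b, HasDerivAt F 0 x := by
    intro x hx
    have hx' := Ioo_subset_Icc_self hx
    refine ((hP x hx).fun_mul (((hu x hx').fun_mul (hv' x hx')).fun_sub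
      ((hu' x hx').fun_mul (hv x hx')))).congr_deriv ?_
    field_simp [hφ₂ x hx]
    linear_combination P x * u x * heqv x hx - P x * v x * hequ x hx
  obtain ⟨c, -, hc⟩ := exists_hasDerivAt_eq_slope F (fun _ => 0) hab hFc hF
  have hFb : P b * (u b * v' b - u' b * v b) = 0 := by
    simpa [F, hPa, sub_ne_zero.2 hab.ne', eq_comm (a := (0:ℝ))] using hc
  exact (mul_eq_zero.1 hFb).resolve_left hPb

lemma wronskian_reflection_eq_zero {ε lam : ℝ} (hε : 0 < ε) (hε2 : ε < 1/2) {u u' u'' : ℝ → ℝ}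
    (hu : ∀ x ∈ Icc (0:ℝ) 1, HasDerivAt u (u' x) x)
    (hu' : ∀ x ∈ Icc (0:ℝ) 1, HasDerivAt u' (u'' x) x)
    (heq : ∀ x ∈ Icc (0:ℝ) 1, phi2 ε x * u'' x + phi1 ε x * u' x = lam * u x) :
    u ε * u' (1 - ε) + u' ε * u (1 - ε) = 0 := by
  have hsub : Icc (x0 ε) ε ⊆ Icc 0 1 := Icc_subset_Icc (x0_pos hε).le (by linarith)
  have hsub' {x} (hx : x ∈ Icc (x0 ε) ε) : 1 - x ∈ Icc (0:ℝ) 1 := by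
    have := hsub hx; constructor <;> linarith [this.1, this.2]
  have key := wronskian_eq_zero_of_integrating_factor (x0_lt_self hε) (continuousOn_gfun hε)
    (gfun_x0 ε) (gfun_self_pos hε).ne' (fun x hx => hasDerivAt_gfun hε hx)
    (fun x hx => (phi2_neg hε (Ioo_subset_Ioc_self hx)).ne)
    (fun x hx => hu x (hsub hx)) (fun x hx => hu' x (hsub hx))
    (v := fun x => u (1 - x)) (v' := fun x => -u' (1 - x)) (v'' := fun x => u'' (1 - x))
    (fun x hx => (hu _ (hsub' hx)).comp_const_sub 1 x)
    (fun x hx => by simpa using ((hu' _ (hsub' hx)).comp_const_sub 1 x).fun_neg)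
    (fun x hx => heq x (hsub (Ioo_subset_Icc_self hx)))
    (fun x hx => by
      have := heq (1 - x) (hsub' (Ioo_subset_Icc_self hx))
      rw [phi2_one_sub hε hε2 hx.2.le, phi1_one_sub hε hε2 hx.2.le] at this
      linear_combination this)
  linear_combination -key

lemma eq_cos_sin_of_hasDerivAt_eq_neg_sq_mul {u u' u'' : ℝ → ℝ} {a b ω : ℝ} (hab : a ≤ b)
    (hω : ω ≠ 0) (hu : ∀ x ∈ Icc a b, HasDerivAt u (u' x) x)
    (hu' : ∀ x ∈ Icc a b, HasDerivAt u' (u'' x) x) (heq : ∀ x ∈ Icc a b, u'' x = -ω ^ 2 * u x) :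
    u b = u a * cos (ω * (b - a)) + u' a / ω * sin (ω * (b - a)) ∧
      u' b = -(u a * ω * sin (ω * (b - a))) + u' a * cos (ω * (b - a)) := by
  have hθ (x : ℝ) : HasDerivAt (fun y => ω * (y - a)) ω x := by
    simpa using ((hasDerivAt_id' x).sub_const a).const_mul ω
  -- first integrals: `(u, u' / ω)` rotated back by the angle `ω (x - a)`
  let A x := u x * cos (ω * (x - a)) - u' x / ω * sin (ω * (x - a))
  let B x := u x * sin (ω * (x - a)) + u' x / ω * cos (ω * (x - a))
  have const {f : ℝ → ℝ} (hf : ∀ x ∈ Icc a b, HasDerivAt f 0 x) : f b = f a :=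
    constant_of_has_deriv_right_zero (fun x hx => (hf x hx).continuousAt.continuousWithinAt)
      (fun x hx => (hf x (Ico_subset_Icc_self hx)).hasDerivWithinAt) b ⟨hab, le_rfl⟩
  have hA : A b = u a := by
    refine (const fun x hx => ?_).trans (by simp [A])
    refine (((hu x hx).mul (hθ x).cos).sub
      (((hu' x hx).div_const ω).mul (hθ x).sin)).congr_deriv ?_
    rw [heq x hx]
    field_simp
    ring
  have hB : B b = u' a / ω := by
    refine (const fun x hx => ?_).trans (by simp [B])
    refine (((hu x hx).mul (hθ x).sin).add
      (((hu' x hx).div_const ω).mul (hθ x).cos)).congr_deriv ?_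
    rw [heq x hx]
    field_simp
    ring
  have hpyth := sin_sq_add_cos_sq (ω * (b - a))
  constructor
  · linear_combination cos (ω * (b - a)) * hA + sin (ω * (b - a)) * hB - u b * hpyth
  · have hu'b : u' b / ω = -(u a * sin (ω * (b - a))) + u' a / ω * cos (ω * (b - a)) := by
      linear_combination (-sin (ω * (b - a))) * hA + cos (ω * (b - a)) * hB - u' b / ω * hpyth
    field_simp at hu'b
    linear_combination hu'b

theorem stmt10 :
    ∃ ε₀ > (0:ℝ), ∀ ε : ℝ, 0 < ε → ε ≤ ε₀ →
      ∀ (lam : ℝ), 0 ≤ lam → ∀ (u u' u'' : ℝ → ℝ),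
        (∀ x ∈ Icc (0:ℝ) 1, HasDerivAt u (u' x) x) →
        (∀ x ∈ Icc (0:ℝ) 1, HasDerivAt u' (u'' x) x) →
        ContinuousOn u'' (Icc 0 1) →
        (∀ x ∈ Icc (0:ℝ) 1, phi2 ε x * u'' x + phi1 ε x * u' x = lam * u x) →
        (∃ x ∈ Icc (0:ℝ) 1, u x ≠ 0) →
        Real.sin (Real.sqrt (6*lam) * (1 - 2*ε)) * ((u' ε)^2 - 6*lam*(u ε)^2) +
          2*Real.sqrt (6*lam) * Real.cos (Real.sqrt (6*lam) * (1 - 2*ε)) * (u ε * u' ε) = 0 := by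
  refine ⟨1/4, by norm_num, fun ε hε hε₀ lam hlam u u' u'' hu hu' _ heq _ => ?_⟩
  rcases hlam.eq_or_lt with rfl | hlam
  · simp
  have hω : √(6 * lam) ≠ 0 := (sqrt_pos.2 (by linarith)).ne'
  have hω2 : √(6 * lam) ^ 2 = 6 * lam := sq_sqrt (by linarith)
  have hsub : Icc ε (1 - ε) ⊆ Icc 0 1 := Icc_subset_Icc hε.le (by linarith)
  have hmid (x) (hx : x ∈ Icc ε (1 - ε)) : u'' x = -√(6 * lam) ^ 2 * u x := by
    have := heq x (hsub hx)
    rw [phi2_eq_of_mem_Icc hε hx, phi1_eq_of_mem_Icc hε hx] at this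
    linear_combination -6 * this + u x * hω2
  obtain ⟨hub, hu'b⟩ := eq_cos_sin_of_hasDerivAt_eq_neg_sq_mul (by linarith) hω
    (fun x hx => hu x (hsub hx)) (fun x hx => hu' x (hsub hx)) hmid
  have hW := wronskian_reflection_eq_zero hε (by linarith) hu hu' heq
  rw [hub, hu'b, show 1 - ε - ε = 1 - 2 * ε by ring] at hW
  field_simp at hW
  linear_combination hW + sin (√(6 * lam) * (1 - 2 * ε)) * u ε ^ 2 * hω2
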